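/- The group ring R = ℤ_(p) C_p is a local ring whose unique maximal ideal is its Jacobson radical J(R), which under the identification R ⊆ S ⊕ T = ℤ_(p) ⊕ ℤ_(p)[ζ_p] equals pS ⊕ πT where π = 1 - ζ_p. -/

import Mathlib

/-!
`ℤ_(p)` is the localization of `ℤ` at `(p)`, hence local with maximal ideal `(p)` and residue
field of characteristic `p`. Let `M` be a maximal ideal of `R = ℤ_(p)[G]` for a finite `p`-group
`G`. By integrality `M` lies over `(p)`, so `R ⧸ M` is a field of characteristic `p`, in which
`(g - 1) ^ p ^ k = g ^ p ^ k - 1 = 0`; thus `R → R ⧸ M` factors through the augmentation `ε`, and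
`M = ε⁻¹ (p)`. So `R` is local with `J(R) = ε⁻¹ (p)`.

For `φ : σ ↦ (1, ζ)` the first coordinate of `φ` is `ε`, and the second one is `ε` modulo
`π = 1 - ζ` because `ζ ≡ 1 mod π`; as `π ∣ p`, `φ` maps `J(R)` into `pS ⊕ πT`. Conversely
`(a, t) = φ (a + (1 - σ) r)` whenever `φ(r).2 = (t - a) / π`, and such an `r` exists because
`ζ = φ(σ).2` generates `T`.
-/

open scoped BigOperators

def Zsub (p : ℕ) [Fact p.Prime] : Subring ℚ where
  carrier := {x : ℚ | ¬ (p ∣ x.den)}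
  zero_mem' := by simp [Nat.Prime.ne_one (Fact.out (p := p.Prime))]
  one_mem' := by simp [Nat.Prime.ne_one (Fact.out (p := p.Prime))]
  add_mem' := by
    intro a b ha hb hd
    rcases (Nat.Prime.dvd_mul (Fact.out (p := p.Prime))).1
      (hd.trans (Rat.add_den_dvd a b)) with h | h
    exacts [ha h, hb h]
  mul_mem' := by
    intro a b ha hb hd
    rcases (Nat.Prime.dvd_mul (Fact.out (p := p.Prime))).1
      (hd.trans (Rat.mul_den_dvd a b)) with h | h
    exacts [ha h, hb h]
  neg_mem' := by intro a ha; simpa using ha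

abbrev Cp (p : ℕ) := Multiplicative (ZMod p)

def sigmaGen (p : ℕ) : Cp p := Multiplicative.ofAdd (1 : ZMod p)

/-- The group ring `R = ℤ_(p) C_p`. -/
abbrev Rgrp (p : ℕ) [Fact p.Prime] := MonoidAlgebra (Zsub p) (Cp p)

/-- The ring `T = ℤ_(p)[ζ_p]`, realized by adjoining a root of the `p`-th
cyclotomic polynomial to `ℤ_(p)`. -/
abbrev Tring (p : ℕ) [Fact p.Prime] := AdjoinRoot (Polynomial.cyclotomic p (Zsub p))

/-- `ζ_p` as an element of `T`. -/
noncomputable def zetaT (p : ℕ) [Fact p.Prime] : Tring p :=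
  AdjoinRoot.root (Polynomial.cyclotomic p (Zsub p))

open IsLocalRing Polynomial

theorem IsPGroup.monoidHom_apply_eq_one {p : ℕ} [Fact p.Prime] {G K : Type*} [Group G]
    [CommRing K] [IsReduced K] [CharP K p] (hG : IsPGroup p G) (f : G →* K) (g : G) :
    f g = 1 := by
  obtain ⟨k, hk⟩ := hG g
  have hnil : (f g - 1) ^ p ^ k = 0 := by
    rw [sub_pow_char_pow, ← map_pow, hk, map_one, one_pow, sub_self]
  exact sub_eq_zero.1 (IsReduced.eq_zero _ ⟨_, hnil⟩)

namespace MonoidAlgebra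

variable (A G : Type*) [CommRing A] [CommGroup G]

noncomputable def augmentation : MonoidAlgebra A G →ₐ[A] A := lift A A G 1

variable {A G}

@[simp]
theorem augmentation_single (g : G) (a : A) : augmentation A G (single g a) = a := by
  simp [augmentation]

theorem augmentation_surjective : Function.Surjective (augmentation A G) :=
  fun a => ⟨algebraMap A _ a, (augmentation A G).commutes a⟩

variable [IsLocalRing A] [Finite G] {p : ℕ} [Fact p.Prime] [CharP (ResidueField A) p]

theorem eq_comap_augmentation_of_isMaximal (hG : IsPGroup p G) (M : Ideal (MonoidAlgebra A G))
    [M.IsMaximal] : M = (maximalIdeal A).comap (augmentation A G) := by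
  have hcomap : M.comap (algebraMap A _) = maximalIdeal A :=
    eq_maximalIdeal (Ideal.isMaximal_comap_of_isIntegral_of_isMaximal M)
  let := Ideal.Quotient.field M
  have : CharP (MonoidAlgebra A G ⧸ M) p := by
    rw [CharP.charP_iff_prime_eq_zero Fact.out, ← map_natCast (Ideal.Quotient.mk M),
      Ideal.Quotient.eq_zero_iff_mem, ← map_natCast (algebraMap A _), ← Ideal.mem_comap, hcomap,
      ← residue_eq_zero_iff, map_natCast, CharP.cast_eq_zero]
  have hfactor : Ideal.Quotient.mkₐ A M =
      (Ideal.Quotient.mkₐ A M).comp ((Algebra.ofId A _).comp (augmentation A G)) :=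
    algHom_ext (fun g => by
      simpa [← one_def] using hG.monoidHom_apply_eq_one
        ((Ideal.Quotient.mk M).toMonoidHom.comp (of A G)) g) (Subsingleton.elim _ _)
  ext x
  rw [← Ideal.Quotient.eq_zero_iff_mem, ← Ideal.Quotient.mkₐ_eq_mk A, hfactor, Ideal.mem_comap,
    ← hcomap]
  simp [Ideal.Quotient.eq_zero_iff_mem]

theorem isLocalRing_of_isPGroup (hG : IsPGroup p G) : IsLocalRing (MonoidAlgebra A G) :=
  .of_unique_max_ideal ⟨_, Ideal.comap_isMaximal_of_surjective _ augmentation_surjective,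
    fun M _ => eq_comap_augmentation_of_isMaximal hG M⟩

theorem maximalIdeal_eq_comap_augmentation [IsLocalRing (MonoidAlgebra A G)]
    (hG : IsPGroup p G) :
    maximalIdeal (MonoidAlgebra A G) = (maximalIdeal A).comap (augmentation A G) :=
  eq_comap_augmentation_of_isMaximal hG _

end MonoidAlgebra

namespace Zsub

variable (p : ℕ) [Fact p.Prime]

instance : (Ideal.span {(p : ℤ)}).IsPrime :=
  (Ideal.span_singleton_prime (by exact_mod_cast (Fact.out : p.Prime).ne_zero)).2
    (Nat.prime_iff_prime_int.1 Fact.out)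

instance isLocalization : IsLocalization.AtPrime (Zsub p) (Ideal.span {(p : ℤ)}) where
  map_units := by
    rintro ⟨n, hn⟩
    have hn0 : (n : ℚ) ≠ 0 := by
      rintro h; exact hn (by simp [Int.cast_eq_zero.1 h])
    have hinv : (n : ℚ)⁻¹ ∈ Zsub p := by
      show ¬ p ∣ _
      rw [Rat.den_inv_of_ne_zero hn0, Rat.num_intCast, ← Int.natCast_dvd]
      simpa [Ideal.mem_span_singleton] using hn
    refine IsUnit.of_mul_eq_one (⟨_, hinv⟩ : Zsub p) (Subtype.ext ?_)
    simp [hn0]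
  surj := by
    intro z
    refine ⟨((z : ℚ).num, ⟨(z : ℚ).den, ?_⟩), Subtype.ext ?_⟩
    · exact (Ideal.mem_span_singleton.trans Int.natCast_dvd_natCast).not.2 z.2
    · simp [Rat.mul_den_eq_num]
  exists_of_eq := by
    intro m n h
    exact ⟨1, by simpa using congrArg (fun z : Zsub p => (z : ℚ)) h⟩

instance : IsLocalRing (Zsub p) := IsLocalization.AtPrime.isLocalRing _ (Ideal.span {(p : ℤ)})

theorem maximalIdeal_eq : maximalIdeal (Zsub p) = Ideal.span {(p : Zsub p)} := by
  rw [← IsLocalization.AtPrime.map_eq_maximalIdeal (Ideal.span {(p : ℤ)}), Ideal.map_span,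
    Set.image_singleton, map_natCast]

instance : CharP (ResidueField (Zsub p)) p := by
  rw [CharP.charP_iff_prime_eq_zero Fact.out, ← map_natCast (residue (Zsub p)),
    residue_eq_zero_iff, maximalIdeal_eq]
  exact Ideal.mem_span_singleton_self _

end Zsub

theorem Cp.isPGroup (p : ℕ) [Fact p.Prime] : IsPGroup p (Cp p) :=
  IsPGroup.of_card (n := 1) (by simp)

theorem sigmaGen_pow_val {p : ℕ} [NeZero p] (g : Cp p) :
    sigmaGen p ^ (Multiplicative.toAdd g).val = g := by
  simp [sigmaGen, ← ofAdd_nsmul]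

theorem MonoidAlgebra.algHom_ext_sigmaGen {A B : Type*} [CommSemiring A] [Semiring B]
    [Algebra A B] {p : ℕ} [NeZero p] {f g : MonoidAlgebra A (Cp p) →ₐ[A] B}
    (h : f (of A _ (sigmaGen p)) = g (of A _ (sigmaGen p))) : f = g :=
  algHom_ext (fun m => by rw [← of_apply, ← sigmaGen_pow_val m, map_pow, map_pow, map_pow, h])
    (Subsingleton.elim _ _)

theorem AdjoinRoot.algHom_surjective_of_apply_eq_root {R S : Type*} [CommRing R] [CommRing S]
    [Algebra R S] {g : R[X]} (f : S →ₐ[R] AdjoinRoot g) {s : S} (hs : f s = root g) :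
    Function.Surjective f := by
  intro t
  obtain ⟨q, rfl⟩ := mk_surjective t
  exact ⟨aeval s q, by rw [← aeval_algHom_apply, hs, aeval_eq]⟩

theorem one_sub_dvd_natCast_of_isRoot_cyclotomic {B : Type*} [CommRing B] {p : ℕ} [Fact p.Prime]
    {ζ : B} (hζ : (cyclotomic p B).IsRoot ζ) : 1 - ζ ∣ (p : B) := by
  simpa [hζ.eq_zero, eval_one_cyclotomic_prime] using sub_dvd_eval_sub 1 ζ (cyclotomic p B)

theorem isRoot_cyclotomic_zetaT (p : ℕ) [Fact p.Prime] :
    (cyclotomic p (Tring p)).IsRoot (zetaT p) := by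
  simpa [map_cyclotomic, zetaT] using AdjoinRoot.isRoot_root (cyclotomic p (Zsub p))

namespace Rgrp

open MonoidAlgebra

variable {p : ℕ} [Fact p.Prime] {φ : Rgrp p →ₐ[Zsub p] Zsub p × Tring p}

theorem fst_comp_eq_augmentation (hφ : φ (of (Zsub p) (Cp p) (sigmaGen p)) = (1, zetaT p)) :
    (AlgHom.fst _ _ _).comp φ = augmentation (Zsub p) (Cp p) :=
  algHom_ext_sigmaGen (by rw [AlgHom.comp_apply, hφ]; simp)

theorem mk_snd_comp_eq_augmentation (hφ : φ (of (Zsub p) (Cp p) (sigmaGen p)) = (1, zetaT p)) :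
    (Ideal.Quotient.mkₐ _ (Ideal.span {1 - zetaT p})).comp ((AlgHom.snd _ _ _).comp φ) =
      (Algebra.ofId _ _).comp (augmentation (Zsub p) (Cp p)) := by
  refine algHom_ext_sigmaGen ?_
  simp only [AlgHom.comp_apply, hφ, AlgHom.snd_apply, Ideal.Quotient.mkₐ_eq_mk]
  rw [of_apply, augmentation_single, map_one, ← map_one (Ideal.Quotient.mk _), Ideal.Quotient.eq]
  exact Ideal.mem_span_singleton.2 ⟨-1, by ring⟩

theorem snd_comp_surjective (hφ : φ (of (Zsub p) (Cp p) (sigmaGen p)) = (1, zetaT p)) :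
    Function.Surjective ((AlgHom.snd _ _ _).comp φ) :=
  AdjoinRoot.algHom_surjective_of_apply_eq_root _ (s := of _ _ (sigmaGen p))
    (by rw [AlgHom.comp_apply, hφ]; rfl)

theorem image_comap_augmentation_eq (hφ : φ (of (Zsub p) (Cp p) (sigmaGen p)) = (1, zetaT p)) :
    φ '' ((Ideal.span {(p : Zsub p)}).comap (augmentation (Zsub p) (Cp p)) : Set (Rgrp p)) =
      {q | q.1 ∈ Ideal.span {(p : Zsub p)} ∧ q.2 ∈ Ideal.span {1 - zetaT p}} := by
  set I := Ideal.span {1 - zetaT p}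
  have hspan : Ideal.span {(p : Zsub p)} ≤ I.comap (algebraMap (Zsub p) (Tring p)) := by
    rw [Ideal.span_le, Set.singleton_subset_iff, SetLike.mem_coe, Ideal.mem_comap, map_natCast]
    exact Ideal.mem_span_singleton.2
      (one_sub_dvd_natCast_of_isRoot_cyclotomic (isRoot_cyclotomic_zetaT p))
  ext ⟨a, t⟩
  constructor
  · rintro ⟨x, hx, hxq⟩
    have h1 := DFunLike.congr_fun (fst_comp_eq_augmentation hφ) x
    have h2 := DFunLike.congr_fun (mk_snd_comp_eq_augmentation hφ) x
    simp only [AlgHom.comp_apply, AlgHom.fst_apply, AlgHom.snd_apply, hxq,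
      Ideal.Quotient.mkₐ_eq_mk, Algebra.ofId_apply] at h1 h2
    refine ⟨h1 ▸ hx, ?_⟩
    simpa using I.add_mem (Ideal.Quotient.eq.1 h2) (hspan hx)
  · rintro ⟨ha, ht⟩
    obtain ⟨s, hs⟩ := Ideal.mem_span_singleton'.1 (I.sub_mem ht (hspan ha))
    obtain ⟨r, hr⟩ := snd_comp_surjective hφ s
    rw [AlgHom.comp_apply, AlgHom.snd_apply] at hr
    have hx : φ (algebraMap _ _ a + (1 - of _ _ (sigmaGen p)) * r) = (a, t) := by
      rw [map_add, map_mul, map_sub, map_one, hφ, AlgHom.commutes]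
      ext
      · simp
      · simp only [Prod.snd_add, Prod.snd_mul, Prod.snd_sub, Prod.snd_one,
          Prod.algebraMap_apply, hr]
        rw [mul_comm, hs]
        ring
    refine ⟨_, ?_, hx⟩
    rw [SetLike.mem_coe, Ideal.mem_comap, ← DFunLike.congr_fun (fst_comp_eq_augmentation hφ),
      AlgHom.comp_apply, hx]
    exact ha

end Rgrp

/-- The group ring `R = ℤ_(p) C_p` is a local ring; its unique
maximal ideal is its Jacobson radical `J(R)`, and under the embedding
`R ⊆ S ⊕ T = ℤ_(p) ⊕ ℤ_(p)[ζ_p]` (the `ℤ_(p)`-algebra map sending `σ` to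
`(1, ζ_p)`) the Jacobson radical is carried onto `pS ⊕ πT`, where `π = 1 - ζ_p`. -/
theorem stmt3 (p : ℕ) [Fact p.Prime] :
    IsLocalRing (Rgrp p) ∧
    (Ideal.jacobson (⊥ : Ideal (Rgrp p))).IsMaximal ∧
    ∀ (φ : Rgrp p →ₐ[Zsub p] (Zsub p) × Tring p),
      φ (MonoidAlgebra.of (Zsub p) (Cp p) (sigmaGen p)) = (1, zetaT p) →
      φ '' (Ideal.jacobson (⊥ : Ideal (Rgrp p)) : Set (Rgrp p)) =
        {q : (Zsub p) × Tring p |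
          q.1 ∈ Ideal.span {(p : Zsub p)} ∧ q.2 ∈ Ideal.span {1 - zetaT p}} := by
  have : IsLocalRing (Rgrp p) := MonoidAlgebra.isLocalRing_of_isPGroup (Cp.isPGroup p)
  have hJ : Ideal.jacobson (⊥ : Ideal (Rgrp p)) = maximalIdeal (Rgrp p) :=
    jacobson_eq_maximalIdeal _ bot_ne_top
  refine ⟨this, hJ ▸ maximalIdeal.isMaximal _, fun φ hφ => ?_⟩
  rw [hJ, MonoidAlgebra.maximalIdeal_eq_comap_augmentation (Cp.isPGroup p), Zsub.maximalIdeal_eq]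
  exact Rgrp.image_comap_augmentation_eq hφ
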